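/- arXiv:2305.13125 — 2 statements merged into one kernel-verified Lean document; each statement's English description precedes it below -/
import Mathlib

section
/- Let (S_α)_{α<ω₁} be a transfinite Schreier sequence. For any ordinal 1 ≤ α < ω₁, the map n ↦ rk_{S_α}({n}) is strictly increasing: if m < n then rk_{S_α}({m}) < rk_{S_α}({n}). -/
open Filter Topology NormedSpace

noncomputable section

/-- A combinatorial family: a family of finite subsets of `ℕ` containing all
singletons and hereditary for inclusion. -/
def IsCombFamily (𝓕 : Set (Finset ℕ)) : Prop :=
  (∀ n : ℕ, ({n} : Finset ℕ) ∈ 𝓕) ∧ ∀ F ∈ 𝓕, ∀ G : Finset ℕ, G ⊆ F → G ∈ 𝓕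

/-- A family of finite subsets of `ℕ` is compact if it is closed in `{0,1}^ℕ`,
identifying sets with their characteristic functions. -/
def IsCompactFamily (𝓕 : Set (Finset ℕ)) : Prop :=
  IsClosed {f : ℕ → Bool | ∃ F ∈ 𝓕, ∀ n, f n = true ↔ n ∈ F}

/-- The closure of the family `𝓕` in `{0,1}^ℕ`: all sets every finite subset of
which belongs to `𝓕`. -/
def famClosure (𝓕 : Set (Finset ℕ)) : Set (Set ℕ) :=
  {A | ∀ G : Finset ℕ, ↑G ⊆ A → G ∈ 𝓕}

/-- Maximal elements of a family. -/
def famMax (𝓕 : Set (Finset ℕ)) : Set (Finset ℕ) :=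
  {F | F ∈ 𝓕 ∧ ∀ G ∈ 𝓕, F ⊆ G → F = G}

/-- A spreading family. -/
def IsSpreading (𝓕 : Set (Finset ℕ)) : Prop :=
  ∀ F ∈ 𝓕, ∀ σ : ℕ → ℕ, (∀ n ∈ F, n ≤ σ n) → Finset.image σ F ∈ 𝓕

/-- `X`, with distinguished sequence `e`, is (a realization of) the `p`-convexification
`X_{𝓕,p}` of the combinatorial Banach space associated with `𝓕`: the canonical vectors
have dense linear span, and finitely supported vectors have the norm
`sup { (∑_{i∈F} |a i|^p)^{1/p} : F ∈ 𝓕 }`. -/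
structure IsXFp (𝕜 : Type*) [RCLike 𝕜] (𝓕 : Set (Finset ℕ)) (p : ℝ)
    (X : Type*) [NormedAddCommGroup X] [NormedSpace 𝕜 X] (e : ℕ → X) : Prop where
  dense_span : Dense (Submodule.span 𝕜 (Set.range e) : Set X)
  norm_eq : ∀ a : ℕ →₀ 𝕜,
    ‖∑ i ∈ a.support, a i • e i‖ =
      sSup {r : ℝ | ∃ F ∈ 𝓕, r = (∑ i ∈ F, ‖a i‖ ^ p) ^ (1 / p)}

/-- `(b, bs)` is a normalized 1-unconditional Schauder basis of `E` together with its
coordinate functionals. -/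
structure IsNUBasis (𝕜 : Type*) [RCLike 𝕜] (E : Type*)
    [NormedAddCommGroup E] [NormedSpace 𝕜 E]
    (b : ℕ → E) (bs : ℕ → StrongDual 𝕜 E) : Prop where
  biortho : ∀ i j, bs i (b j) = if i = j then 1 else 0
  normalized : ∀ i, ‖b i‖ = 1
  expansion : ∀ x : E,
    Tendsto (fun N => ∑ i ∈ Finset.range N, bs i x • b i) atTop (nhds x)
  unconditional : ∀ a : ℕ →₀ 𝕜, ∀ ω : ℕ → 𝕜, (∀ i, ‖ω i‖ = 1) →
    ‖∑ i ∈ a.support, ω i • a i • b i‖ = ‖∑ i ∈ a.support, a i • b i‖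

/-- `X`, with distinguished sequence `e`, is (a realization of) `X_{𝓕,E}`. -/
structure IsXFE (𝕜 : Type*) [RCLike 𝕜] (𝓕 : Set (Finset ℕ))
    (E : Type*) [NormedAddCommGroup E] [NormedSpace 𝕜 E] (b : ℕ → E)
    (X : Type*) [NormedAddCommGroup X] [NormedSpace 𝕜 X] (e : ℕ → X) : Prop where
  dense_span : Dense (Submodule.span 𝕜 (Set.range e) : Set X)
  norm_eq : ∀ a : ℕ →₀ 𝕜,
    ‖∑ i ∈ a.support, a i • e i‖ =
      sSup {r : ℝ | ∃ F ∈ 𝓕, r = ‖∑ i ∈ F, a i • b i‖}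

/-- A normed space is strictly convex if its unit sphere contains no nontrivial
segments. -/
def IsStrictlyConvexSp (Y : Type*) [NormedAddCommGroup Y] : Prop :=
  ∀ u v : Y, ‖u‖ = 1 → ‖v‖ = 1 → u ≠ v → ‖u + v‖ < 2

/-- `x` is an extreme point of the closed unit ball of `Y`. -/
def IsExtremePtBall {Y : Type*} [NormedAddCommGroup Y] (x : Y) : Prop :=
  ‖x‖ ≤ 1 ∧ ∀ u v : Y, ‖u‖ ≤ 1 → ‖v‖ ≤ 1 → u + v = x + x → u = x ∧ v = x

/-- `x` is an extreme point of the closed unit ball of the subspace `M`. -/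
def IsExtremePtBallIn {𝕜 Y : Type*} [RCLike 𝕜] [NormedAddCommGroup Y] [NormedSpace 𝕜 Y]
    (M : Submodule 𝕜 Y) (x : Y) : Prop :=
  x ∈ M ∧ ‖x‖ ≤ 1 ∧
    ∀ u v : Y, u ∈ M → v ∈ M → ‖u‖ ≤ 1 → ‖v‖ ≤ 1 → u + v = x + x → u = x ∧ v = x

/-- The basis `b` is strictly 1-unconditional. -/
def StrictlyUnconditional (𝕜 : Type*) [RCLike 𝕜] {E : Type*}
    [NormedAddCommGroup E] [NormedSpace 𝕜 E] (b : ℕ → E) : Prop :=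
  ∀ a c : ℕ →₀ 𝕜, (∀ i, ‖a i‖ ≤ ‖c i‖) → (∃ i, ‖a i‖ < ‖c i‖) →
    ‖∑ i ∈ c.support, a i • b i‖ < ‖∑ i ∈ c.support, c i • b i‖

/-- The basis `b` is 1-symmetric: every permutation of `ℕ` induces a surjective
linear isometry of `E` permuting the basis vectors. -/
def IsSymmetricBasis (𝕜 : Type*) [RCLike 𝕜] {E : Type*}
    [NormedAddCommGroup E] [NormedSpace 𝕜 E] (b : ℕ → E) : Prop :=
  ∀ σ : Equiv.Perm ℕ, ∃ T : E ≃ₗᵢ[𝕜] E, ∀ i, T (b i) = b (σ i)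

/-- Condition (H): for `j ≠ k`, any linear isometric embedding of `span(bs j, bs k)`
into the dual of `E` sends `bs j` and `bs k` to functionals with disjoint supports. -/
def CondH (𝕜 : Type*) [RCLike 𝕜] {E : Type*} [NormedAddCommGroup E] [NormedSpace 𝕜 E]
    (b : ℕ → E) (bs : ℕ → StrongDual 𝕜 E) : Prop :=
  ∀ j k : ℕ, j ≠ k →
    ∀ T : ↥(Submodule.span 𝕜 {bs j, bs k}) →ₗᵢ[𝕜] StrongDual 𝕜 E,
      ∀ i : ℕ,
        T ⟨bs j, Submodule.subset_span (Set.mem_insert _ _)⟩ (b i) = 0 ∨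
        T ⟨bs k, Submodule.subset_span (Set.mem_insert_of_mem _ rfl)⟩ (b i) = 0

/-- `span(u,v)` is isometrically equal to `ℓ₂(2)`. -/
def SpanIsL2 (𝕜 : Type*) [RCLike 𝕜] {Y : Type*} [NormedAddCommGroup Y] [NormedSpace 𝕜 Y]
    (u v : Y) : Prop :=
  ∀ a c : 𝕜, ‖a • u + c • v‖ ^ 2 = ‖a‖ ^ 2 + ‖c‖ ^ 2


/-- The first uncountable ordinal. -/
def omega1 : Ordinal := (Cardinal.aleph 1).ord

/-- `E < F` for finite sets: every element of `E` is smaller than every element of `F`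
(vacuously true if one of them is empty). -/
def OrdSets (E F : Finset ℕ) : Prop := ∀ x ∈ E, ∀ y ∈ F, x < y

/-- A transfinite Schreier sequence `(S_α)_{α<ω₁}`, together with, for each limit
ordinal `α < ω₁`, the preassigned strictly increasing approximating sequence
`(α_n)_{n≥1}` (encoded by `approx α n = α_{n+1}`).  Here `ℕ` starts at `1`: members
of the families are finite sets of positive integers. -/
structure SchreierSeq where
  S : Ordinal → Set (Finset ℕ)
  approx : Ordinal → ℕ → Ordinal
  S_zero : S 0 = {F : Finset ℕ | F.card ≤ 1 ∧ ∀ i ∈ F, 1 ≤ i}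
  S_succ : ∀ β : Ordinal, β < omega1 →
    S (β + 1) = {G : Finset ℕ | ∃ (n : ℕ) (E : Fin n → Finset ℕ),
      (∀ i, E i ∈ S β) ∧ (∀ i j : Fin n, i < j → OrdSets (E i) (E j)) ∧
      (∀ x ∈ G, n ≤ x) ∧ G = Finset.univ.biUnion E}
  approx_lt : ∀ α : Ordinal, α < omega1 → Order.IsSuccLimit α → ∀ n, approx α n < α
  approx_mono : ∀ α : Ordinal, α < omega1 → Order.IsSuccLimit α → StrictMono (approx α)
  approx_sup : ∀ α : Ordinal, α < omega1 → Order.IsSuccLimit α → ∀ β < α, ∃ n, β ≤ approx α n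
  S_limit : ∀ α : Ordinal, α < omega1 → Order.IsSuccLimit α →
    S α = {F : Finset ℕ | ∃ n : ℕ, F ∈ S (approx α n) ∧ ∀ x ∈ F, n + 1 ≤ x}

/-- A transfinite Schreier sequence is good if for every limit ordinal the
approximating sequence consists of successor ordinals `β_n + 1` with `(S_{β_n})`
increasing. -/
def SchreierSeq.IsGood (Ss : SchreierSeq) : Prop :=
  ∀ α : Ordinal, α < omega1 → Order.IsSuccLimit α →
    ∃ B : ℕ → Ordinal, (∀ n, Ss.approx α n = B n + 1) ∧
      ∀ n, Ss.S (B n) ⊆ Ss.S (B (n + 1))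

/-- Characteristic function of a finite set, as an element of `{0,1}^ℕ`. -/
def chf (F : Finset ℕ) : ℕ → Bool := fun n => decide (n ∈ F)

/-- The set of accumulation points of `A`. -/
def derivSet (A : Set (ℕ → Bool)) : Set (ℕ → Bool) :=
  {x | ClusterPt x (Filter.principal (A \ {x}))}

/-- The iterated Cantor–Bendixson derivatives of `K ⊆ {0,1}^ℕ`. -/
def cbIter (K : Set (ℕ → Bool)) (o : Ordinal) : Set (ℕ → Bool) :=
  Ordinal.limitRecOn o K (fun _ ih => derivSet ih)
    (fun o _ ih => ⋂ (ξ : Set.Iio o), ih ξ.1 ξ.2)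


lemma mem_derivSet {A : Set (ℕ → Bool)} {x : ℕ → Bool} :
    x ∈ derivSet A ↔ x ∈ closure (A \ {x}) := by
  rw [mem_closure_iff_clusterPt]; rfl

lemma derivSet_mono {A B : Set (ℕ → Bool)} (h : A ⊆ B) : derivSet A ⊆ derivSet B := by
  intro x hx
  rw [mem_derivSet] at hx ⊢
  exact closure_mono (Set.diff_subset_diff_left h) hx

lemma derivSet_isClosed (A : Set (ℕ → Bool)) : IsClosed (derivSet A) := by
  rw [← isOpen_compl_iff, isOpen_iff_mem_nhds]
  intro x hx
  rw [Set.mem_compl_iff, mem_derivSet, mem_closure_iff] at hx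
  push_neg at hx
  obtain ⟨V, hVo, hxV, hV⟩ := hx
  refine Filter.mem_of_superset (hVo.mem_nhds hxV) ?_
  intro y hyV
  rw [Set.mem_compl_iff, mem_derivSet, mem_closure_iff]
  push_neg
  by_cases hyx : y = x
  · subst hyx; exact ⟨V, hVo, hyV, hV⟩
  · refine ⟨V \ {x}, hVo.sdiff isClosed_singleton, ⟨hyV, hyx⟩, ?_⟩
    rw [Set.eq_empty_iff_forall_notMem] at hV ⊢
    intro z hz
    rcases hz with ⟨⟨hzV, hzx⟩, hzA, _⟩
    exact hV z ⟨hzV, hzA, hzx⟩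

lemma derivSet_subset_self {A : Set (ℕ → Bool)} (hA : IsClosed A) : derivSet A ⊆ A := by
  intro x hx
  rw [mem_derivSet] at hx
  have := closure_mono (Set.diff_subset (s := A) (t := {x})) hx
  rwa [hA.closure_eq] at this

lemma image_derivSet_subset {f : (ℕ → Bool) → (ℕ → Bool)} (hc : Continuous f)
    (hi : Function.Injective f) (A : Set (ℕ → Bool)) :
    f '' derivSet A ⊆ derivSet (f '' A) := by
  rintro _ ⟨x, hx, rfl⟩
  rw [mem_derivSet] at hx ⊢
  have h1 : f x ∈ closure (f '' (A \ {x})) :=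
    (image_closure_subset_closure_image hc) ⟨x, hx, rfl⟩
  rwa [Set.image_diff hi, Set.image_singleton] at h1

lemma derivSet_inter_open {A U : Set (ℕ → Bool)} (hU : IsOpen U) :
    derivSet A ∩ U ⊆ derivSet (A ∩ U) := by
  rintro x ⟨hx, hxU⟩
  rw [mem_derivSet] at hx ⊢
  rw [mem_closure_iff] at hx ⊢
  intro O hO hxO
  obtain ⟨z, hzO, hzA, hzx⟩ := hx (O ∩ U) (hO.inter hU) ⟨hxO, hxU⟩
  exact ⟨z, hzO.1, ⟨hzA, hzO.2⟩, hzx⟩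

lemma cbIter_zero (K : Set (ℕ → Bool)) : cbIter K 0 = K :=
  Ordinal.limitRecOn_zero _ _ _

lemma cbIter_succ (K : Set (ℕ → Bool)) (o : Ordinal) :
    cbIter K (o + 1) = derivSet (cbIter K o) := by
  rw [cbIter, Ordinal.add_one_eq_succ, Ordinal.limitRecOn_succ]; rfl

lemma cbIter_limit (K : Set (ℕ → Bool)) {o : Ordinal} (ho : Order.IsSuccLimit o) :
    cbIter K o = ⋂ (ξ : Set.Iio o), cbIter K ξ.1 := by
  rw [cbIter, Ordinal.limitRecOn_limit _ _ _ _ ho]; rfl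

lemma cbIter_mono {A B : Set (ℕ → Bool)} (h : A ⊆ B) (o : Ordinal) :
    cbIter A o ⊆ cbIter B o := by
  induction o using Ordinal.induction with
  | _ o IH =>
    rcases Ordinal.zero_or_succ_or_isSuccLimit o with h0 | ⟨a, rfl⟩ | hl
    · subst h0; rw [cbIter_zero, cbIter_zero]; exact h
    · rw [← Ordinal.add_one_eq_succ, cbIter_succ, cbIter_succ]
      exact derivSet_mono (IH a (by rw [← Ordinal.add_one_eq_succ]; exact Order.lt_succ a))
    · rw [cbIter_limit A hl, cbIter_limit B hl]
      exact Set.iInter_mono fun ξ => IH ξ.1 ξ.2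

lemma image_cbIter_subset {f : (ℕ → Bool) → (ℕ → Bool)} (hc : Continuous f)
    (hi : Function.Injective f) (A : Set (ℕ → Bool)) (o : Ordinal) :
    f '' cbIter A o ⊆ cbIter (f '' A) o := by
  induction o using Ordinal.induction with
  | _ o IH =>
    rcases Ordinal.zero_or_succ_or_isSuccLimit o with h0 | ⟨a, rfl⟩ | hl
    · subst h0; rw [cbIter_zero, cbIter_zero]
    · rw [← Ordinal.add_one_eq_succ, cbIter_succ, cbIter_succ]
      have ha : a < a + 1 := by rw [Ordinal.add_one_eq_succ]; exact Order.lt_succ a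
      exact (image_derivSet_subset hc hi _).trans (derivSet_mono (IH a ha))
    · rw [cbIter_limit A hl, cbIter_limit (f '' A) hl]
      intro x hx
      rcases hx with ⟨y, hy, rfl⟩
      simp only [Set.mem_iInter] at hy ⊢
      exact fun ξ => IH ξ.1 ξ.2 ⟨y, hy ξ, rfl⟩

lemma cbIter_inter_open {A U : Set (ℕ → Bool)} (hU : IsOpen U) (o : Ordinal) :
    cbIter A o ∩ U ⊆ cbIter (A ∩ U) o := by
  induction o using Ordinal.induction with
  | _ o IH =>
    rcases Ordinal.zero_or_succ_or_isSuccLimit o with h0 | ⟨a, rfl⟩ | hl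
    · subst h0; rw [cbIter_zero, cbIter_zero]
    · rw [← Ordinal.add_one_eq_succ, cbIter_succ, cbIter_succ]
      have ha : a < a + 1 := by rw [Ordinal.add_one_eq_succ]; exact Order.lt_succ a
      exact (derivSet_inter_open hU).trans (derivSet_mono (IH a ha))
    · rw [cbIter_limit A hl, cbIter_limit (A ∩ U) hl]
      rintro x ⟨hx, hxU⟩
      simp only [Set.mem_iInter] at hx ⊢
      exact fun ξ => IH ξ.1 ξ.2 ⟨hx ξ, hxU⟩

lemma cbIter_isClosed {K : Set (ℕ → Bool)} (hK : IsClosed K) (o : Ordinal) :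
    IsClosed (cbIter K o) := by
  induction o using Ordinal.induction with
  | _ o IH =>
    rcases Ordinal.zero_or_succ_or_isSuccLimit o with h0 | ⟨a, rfl⟩ | hl
    · subst h0; rw [cbIter_zero]; exact hK
    · rw [← Ordinal.add_one_eq_succ, cbIter_succ]; exact derivSet_isClosed _
    · rw [cbIter_limit K hl]
      exact isClosed_iInter fun ξ => IH ξ.1 ξ.2

lemma cbIter_antitone {K : Set (ℕ → Bool)} (hK : IsClosed K) {γ δ : Ordinal}
    (h : γ ≤ δ) : cbIter K δ ⊆ cbIter K γ := by
  induction δ using Ordinal.induction with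
  | _ δ IH =>
    rcases eq_or_lt_of_le h with rfl | hlt
    · exact le_refl _
    rcases Ordinal.zero_or_succ_or_isSuccLimit δ with h0 | ⟨a, rfl⟩ | hl
    · subst h0; exact absurd hlt (not_lt_zero (a := γ))
    · have ha : a < a + 1 := by rw [Ordinal.add_one_eq_succ]; exact Order.lt_succ a
      have h1 : cbIter K (a + 1) ⊆ cbIter K a := by
        rw [cbIter_succ]; exact derivSet_subset_self (cbIter_isClosed hK a)
      rw [← Ordinal.add_one_eq_succ] at *
      exact h1.trans (IH a ha (Order.lt_succ_iff.mp (by rw [Ordinal.add_one_eq_succ] at hlt; exact hlt)))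
    · rw [cbIter_limit K hl]
      exact Set.iInter_subset_of_subset ⟨γ, hlt⟩ (le_refl _)

namespace SchreierSeq
variable (Ss : SchreierSeq)

lemma succ_lt_omega1 {a : Ordinal} (h : a + 1 < omega1) : a < omega1 :=
  lt_trans (by rw [Ordinal.add_one_eq_succ]; exact Order.lt_succ a) h

lemma pos_mem : ∀ α < omega1, ∀ F ∈ Ss.S α, ∀ x ∈ F, 1 ≤ x := by
  intro α
  induction α using Ordinal.induction with
  | _ α IH =>
    intro hα F hF x hx
    rcases Ordinal.zero_or_succ_or_isSuccLimit α with h0 | ⟨a, rfl⟩ | hl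
    · subst h0; rw [Ss.S_zero] at hF; exact hF.2 x hx
    · rw [← Ordinal.add_one_eq_succ] at *
      have ha : a < omega1 := succ_lt_omega1 hα
      rw [Ss.S_succ a ha] at hF
      obtain ⟨k, E, hE, _, _, rfl⟩ := hF
      obtain ⟨i, _, hxi⟩ := Finset.mem_biUnion.mp hx
      exact IH a (by rw [Ordinal.add_one_eq_succ]; exact Order.lt_succ a) ha (E i) (hE i) x hxi
    · rw [Ss.S_limit α hα hl] at hF
      obtain ⟨p, hFp, hmin⟩ := hF
      exact le_trans (Nat.le_add_left 1 p) (hmin x hx)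

lemma hered : ∀ α < omega1, ∀ F ∈ Ss.S α, ∀ G : Finset ℕ, G ⊆ F → G ∈ Ss.S α := by
  intro α
  induction α using Ordinal.induction with
  | _ α IH =>
    intro hα F hF G hGF
    rcases Ordinal.zero_or_succ_or_isSuccLimit α with h0 | ⟨a, rfl⟩ | hl
    · subst h0; rw [Ss.S_zero] at hF ⊢
      exact ⟨le_trans (Finset.card_le_card hGF) hF.1, fun i hi => hF.2 i (hGF hi)⟩
    · rw [← Ordinal.add_one_eq_succ] at *
      have ha : a < omega1 := succ_lt_omega1 hα
      have ha' : a < a + 1 := by rw [Ordinal.add_one_eq_succ]; exact Order.lt_succ a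
      rw [Ss.S_succ a ha] at hF ⊢
      obtain ⟨k, E, hE, hord, hmin, rfl⟩ := hF
      refine ⟨k, fun i => E i ∩ G, fun i => IH a ha' ha (E i) (hE i) _ Finset.inter_subset_left,
        fun i j hij x hxi y hyj => hord i j hij x (Finset.mem_inter.mp hxi).1 y (Finset.mem_inter.mp hyj).1,
        fun x hx => hmin x (hGF hx), ?_⟩
      ext y
      simp only [Finset.mem_biUnion, Finset.mem_univ, true_and, Finset.mem_inter]
      constructor
      · intro hy
        obtain ⟨i, _, hyi⟩ := Finset.mem_biUnion.mp (hGF hy)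
        exact ⟨i, hyi, hy⟩
      · rintro ⟨i, _, hy⟩; exact hy
    · rw [Ss.S_limit α hα hl] at hF ⊢
      obtain ⟨p, hFp, hmin⟩ := hF
      exact ⟨p, IH _ (Ss.approx_lt α hα hl p) (lt_trans (Ss.approx_lt α hα hl p) hα) F hFp G hGF,
        fun x hx => hmin x (hGF hx)⟩

lemma addN_mem : ∀ α < omega1, ∀ F ∈ Ss.S α, ∀ N : ℕ, F.image (· + N) ∈ Ss.S α := by
  intro α
  induction α using Ordinal.induction with
  | _ α IH =>
    intro hα F hF N
    rcases Ordinal.zero_or_succ_or_isSuccLimit α with h0 | ⟨a, rfl⟩ | hl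
    · subst h0; rw [Ss.S_zero] at hF ⊢
      refine ⟨le_trans Finset.card_image_le hF.1, ?_⟩
      intro i hi
      obtain ⟨x, hx, rfl⟩ := Finset.mem_image.mp hi
      exact le_trans (hF.2 x hx) (Nat.le_add_right x N)
    · rw [← Ordinal.add_one_eq_succ] at *
      have ha : a < omega1 := succ_lt_omega1 hα
      have ha' : a < a + 1 := by rw [Ordinal.add_one_eq_succ]; exact Order.lt_succ a
      rw [Ss.S_succ a ha] at hF ⊢
      obtain ⟨k, E, hE, hord, hmin, rfl⟩ := hF
      refine ⟨k, fun i => (E i).image (· + N), fun i => IH a ha' ha (E i) (hE i) N,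
        ?_, ?_, ?_⟩
      · intro i j hij x hxi y hyj
        obtain ⟨x', hx', rfl⟩ := Finset.mem_image.mp hxi
        obtain ⟨y', hy', rfl⟩ := Finset.mem_image.mp hyj
        exact Nat.add_lt_add_right (hord i j hij x' hx' y' hy') N
      · intro x hx
        obtain ⟨x', hx', rfl⟩ := Finset.mem_image.mp hx
        exact le_trans (hmin x' hx') (Nat.le_add_right x' N)
      · rw [Finset.biUnion_image]
    · rw [Ss.S_limit α hα hl] at hF ⊢
      obtain ⟨p, hFp, hmin⟩ := hF
      refine ⟨p, IH _ (Ss.approx_lt α hα hl p) (lt_trans (Ss.approx_lt α hα hl p) hα) F hFp N, ?_⟩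
      intro x hx
      obtain ⟨x', hx', rfl⟩ := Finset.mem_image.mp hx
      exact le_trans (hmin x' hx') (Nat.le_add_right x' N)

lemma sing_mem : ∀ α < omega1, ∀ j : ℕ, 1 ≤ j → ({j} : Finset ℕ) ∈ Ss.S α := by
  intro α
  induction α using Ordinal.induction with
  | _ α IH =>
    intro hα j hj
    rcases Ordinal.zero_or_succ_or_isSuccLimit α with h0 | ⟨a, rfl⟩ | hl
    · subst h0; rw [Ss.S_zero]
      exact ⟨by simp, fun i hi => by simp at hi; omega⟩
    · rw [← Ordinal.add_one_eq_succ] at *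
      have ha : a < omega1 := succ_lt_omega1 hα
      have ha' : a < a + 1 := by rw [Ordinal.add_one_eq_succ]; exact Order.lt_succ a
      rw [Ss.S_succ a ha]
      refine ⟨1, fun _ => {j}, fun _ => IH a ha' ha j hj, ?_, ?_, ?_⟩
      · intro i j hij; exact absurd hij (by omega)
      · intro x hx; simp at hx; omega
      · simp
    · rw [Ss.S_limit α hα hl]
      refine ⟨0, IH _ (Ss.approx_lt α hα hl 0) (lt_trans (Ss.approx_lt α hα hl 0) hα) j hj, ?_⟩
      intro x hx; simp at hx; omega

lemma approx_one_pos {α : Ordinal} (hα : α < omega1) (hl : Order.IsSuccLimit α) :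
    1 ≤ Ss.approx α 1 := by
  have h01 : Ss.approx α 0 < Ss.approx α 1 := Ss.approx_mono α hα hl (by omega)
  have : (0 : Ordinal) ≤ Ss.approx α 0 := zero_le (a := _)
  have h1 : (0 : Ordinal) < Ss.approx α 1 := lt_of_le_of_lt this h01
  exact Order.one_le_iff_pos.mpr h1

lemma pair_mem : ∀ α, 1 ≤ α → α < omega1 → ∀ a b : ℕ, 2 ≤ a → a < b →
    ({a, b} : Finset ℕ) ∈ Ss.S α := by
  intro α
  induction α using Ordinal.induction with
  | _ α IH =>
    intro hα1 hα a b ha2 hab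
    rcases Ordinal.zero_or_succ_or_isSuccLimit α with h0 | ⟨c, rfl⟩ | hl
    · subst h0; exact absurd hα1 (by simp)
    · rw [← Ordinal.add_one_eq_succ] at *
      have hc : c < omega1 := succ_lt_omega1 hα
      rw [Ss.S_succ c hc]
      refine ⟨2, fun i => if i.val = 0 then {a} else {b}, ?_, ?_, ?_, ?_⟩
      · intro i
        by_cases h : i.val = 0 <;> simp [h] <;>
          exact Ss.sing_mem c hc _ (by omega)
      · intro i j hij x hxi y hyj
        have hi0 : i.val = 0 := by omega
        have hj1 : j.val = 1 := by omega
        simp [hi0, hj1] at hxi hyj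
        omega
      · intro x hx
        simp [Finset.mem_insert] at hx
        rcases hx with rfl | rfl <;> omega
      · ext x
        simp only [Finset.mem_biUnion, Finset.mem_univ, true_and, Finset.mem_insert,
          Finset.mem_singleton]
        constructor
        · rintro (rfl | rfl)
          · exact ⟨0, by simp⟩
          · exact ⟨1, by simp⟩
        · rintro ⟨i, hi⟩
          by_cases h : i.val = 0 <;> simp [h] at hi <;> omega
    · rw [Ss.S_limit α hα hl]
      have h1lt : Ss.approx α 1 < α := Ss.approx_lt α hα hl 1
      refine ⟨1, IH _ h1lt (Ss.approx_one_pos hα hl) (lt_trans h1lt hα) a b ha2 hab, ?_⟩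
      intro x hx
      simp [Finset.mem_insert] at hx
      rcases hx with rfl | rfl <;> omega



lemma key_lemma : ∀ α, 1 ≤ α → α < omega1 → ∀ m n N : ℕ, 1 ≤ m → m < n → n ≤ N →
    ∀ F ∈ Ss.S α, m ∈ F → (∀ x ∈ F, m ≤ x) →
    insert n (F.image (· + N)) ∈ Ss.S α := by
  intro α
  induction α using Ordinal.induction with
  | _ α IH =>
    intro hα1 hα m n N hm hmn hnN F hF hmF hFmin
    rcases Ordinal.zero_or_succ_or_isSuccLimit α with h0 | ⟨c, rfl⟩ | hl
    · subst h0; exact absurd hα1 (by simp)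
    · rw [← Ordinal.add_one_eq_succ] at *
      have hc : c < omega1 := succ_lt_omega1 hα
      rw [Ss.S_succ c hc] at hF ⊢
      obtain ⟨k, E, hE, hord, hmin, rfl⟩ := hF
      have hkm : k ≤ m := hmin m hmF
      have hposF : ∀ x ∈ Finset.univ.biUnion E, 1 ≤ x := by
        intro x hx
        obtain ⟨i, _, hxi⟩ := Finset.mem_biUnion.mp hx
        exact Ss.pos_mem c hc (E i) (hE i) x hxi
      refine ⟨k + 1,
        fun i => if h : 0 < i.val then (E ⟨i.val - 1, by omega⟩).image (· + N) else {n},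
        ?_, ?_, ?_, ?_⟩
      · intro i
        by_cases h : 0 < i.val
        · simp only [h, dif_pos]
          exact Ss.addN_mem c hc _ (hE _) N
        · simp only [h, dif_neg]
          exact Ss.sing_mem c hc n (by omega)
      · intro i j hij x hxi y hyj
        have hij' : i.val < j.val := hij
        by_cases hi : 0 < i.val
        · have hj : 0 < j.val := by omega
          simp only [hi, hj, dif_pos] at hxi hyj
          obtain ⟨x', hx', rfl⟩ := Finset.mem_image.mp hxi
          obtain ⟨y', hy', rfl⟩ := Finset.mem_image.mp hyj
          have : x' < y' := hord ⟨i.val - 1, by omega⟩ ⟨j.val - 1, by omega⟩ (by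
            simp only [Fin.mk_lt_mk]; omega) x' hx' y' hy'
          omega
        · have hj : 0 < j.val := by omega
          simp only [dif_neg hi, Finset.mem_singleton] at hxi
          simp only [dif_pos hj] at hyj
          obtain ⟨y', hy', rfl⟩ := Finset.mem_image.mp hyj
          subst hxi
          have h1 : 1 ≤ y' := hposF y' (Finset.mem_biUnion.mpr ⟨_, Finset.mem_univ _, hy'⟩)
          omega
      · intro x hx
        rcases Finset.mem_insert.mp hx with rfl | hx'
        · omega
        · obtain ⟨z, hz, rfl⟩ := Finset.mem_image.mp hx'
          have h1 : 1 ≤ z := hposF z hz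
          omega
      · ext x
        simp only [Finset.mem_insert, Finset.mem_biUnion, Finset.mem_univ, true_and]
        constructor
        · rintro (rfl | hx')
          · exact ⟨⟨0, by omega⟩, by simp⟩
          · obtain ⟨z, hz, rfl⟩ := Finset.mem_image.mp hx'
            obtain ⟨i, _, hzi⟩ := Finset.mem_biUnion.mp hz
            refine ⟨⟨i.val + 1, by omega⟩, ?_⟩
            rw [dif_pos (Nat.succ_pos i.val)]
            exact Finset.mem_image.mpr ⟨z, hzi, rfl⟩
        · rintro ⟨i, hi⟩
          by_cases h : 0 < i.val
          · simp only [h, dif_pos] at hi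
            obtain ⟨z, hz, rfl⟩ := Finset.mem_image.mp hi
            exact Or.inr (Finset.mem_image.mpr ⟨z,
              Finset.mem_biUnion.mpr ⟨_, Finset.mem_univ _, hz⟩, rfl⟩)
          · rw [dif_neg h, Finset.mem_singleton] at hi
            exact Or.inl hi
    · rw [Ss.S_limit α hα hl] at hF ⊢
      obtain ⟨p, hFp, hpmin⟩ := hF
      have hp1m : p + 1 ≤ m := hpmin m hmF
      have hposF : ∀ x ∈ F, 1 ≤ x :=
        Ss.pos_mem _ (lt_trans (Ss.approx_lt α hα hl p) hα) F hFp
      rcases eq_or_lt_of_le (zero_le (a := Ss.approx α p)) with hz | hpos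
      · -- approx α p = 0, so F = {m}
        rw [← hz, Ss.S_zero] at hFp
        have hcard : F.card ≤ 1 := hFp.1
        have hFm : F = {m} := by
          apply Finset.eq_singleton_iff_unique_mem.mpr
          refine ⟨hmF, fun x hx => ?_⟩
          by_contra hne
          have h2 : 2 ≤ F.card := Finset.one_lt_card.mpr ⟨m, hmF, x, hx, fun h => hne h.symm⟩
          omega
        subst hFm
        have happ1 : Ss.approx α 1 < α := Ss.approx_lt α hα hl 1
        refine ⟨1, ?_, ?_⟩
        · have : insert n (Finset.image (· + N) {m}) = ({n, m + N} : Finset ℕ) := by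
            simp [Finset.image_singleton]
          rw [this]
          exact Ss.pair_mem _ (Ss.approx_one_pos hα hl) (lt_trans happ1 hα) n (m + N)
            (by omega) (by omega)
        · intro x hx
          rcases Finset.mem_insert.mp hx with rfl | hx'
          · omega
          · simp only [Finset.image_singleton, Finset.mem_singleton] at hx'
            omega
      · -- 1 ≤ approx α p
        have happ : Ss.approx α p < α := Ss.approx_lt α hα hl p
        refine ⟨p, IH _ happ (Order.one_le_iff_pos.mpr hpos) (lt_trans happ hα)
          m n N hm hmn hnN F hFp hmF hFmin, ?_⟩
        intro x hx
        rcases Finset.mem_insert.mp hx with rfl | hx'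
        · omega
        · obtain ⟨z, hz, rfl⟩ := Finset.mem_image.mp hx'
          have := hpmin z hz
          omega



open Classical in
/-- initial segment of a set of naturals, up to `N`, as a Finset -/
noncomputable def seg (A : Set ℕ) (N : ℕ) : Finset ℕ :=
  (Finset.range (N + 1)).filter (· ∈ A)

lemma mem_seg {A : Set ℕ} {N x : ℕ} : x ∈ seg A N ↔ x ∈ A ∧ x ≤ N := by
  classical
  simp only [seg, Finset.mem_filter, Finset.mem_range]
  constructor
  · rintro ⟨h1, h2⟩; exact ⟨by convert h2, by omega⟩
  · rintro ⟨h1, h2⟩; exact ⟨by omega, by convert h1⟩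

lemma seg_mono {A : Set ℕ} {N N' : ℕ} (h : N ≤ N') : seg A N ⊆ seg A N' := by
  intro x hx
  rw [mem_seg] at hx ⊢
  exact ⟨hx.1, le_trans hx.2 h⟩

lemma empty_mem : ∀ α < omega1, (∅ : Finset ℕ) ∈ Ss.S α := by
  intro α
  induction α using Ordinal.induction with
  | _ α IH =>
    intro hα
    rcases Ordinal.zero_or_succ_or_isSuccLimit α with h0 | ⟨a, rfl⟩ | hl
    · subst h0; rw [Ss.S_zero]; exact ⟨by simp, by simp⟩
    · rw [← Ordinal.add_one_eq_succ] at *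
      have ha : a < omega1 := succ_lt_omega1 hα
      rw [Ss.S_succ a ha]
      exact ⟨0, Fin.elim0, fun i => i.elim0, fun i => i.elim0, by simp, by simp⟩
    · rw [Ss.S_limit α hα hl]
      exact ⟨0, IH _ (Ss.approx_lt α hα hl 0) (lt_trans (Ss.approx_lt α hα hl 0) hα), by simp⟩

/-- `k`-fold successive unions of members of `S β` -/
def Tfam (β : Ordinal) (k : ℕ) : Set (Finset ℕ) :=
  {G | ∃ E : Fin k → Finset ℕ, (∀ i, E i ∈ Ss.S β) ∧
    (∀ i j : Fin k, i < j → OrdSets (E i) (E j)) ∧ G = Finset.univ.biUnion E}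

lemma Tfam_hered {β : Ordinal} (hβ : β < omega1) {k : ℕ} {G : Finset ℕ}
    (hG : G ∈ Ss.Tfam β k) {G' : Finset ℕ} (h : G' ⊆ G) : G' ∈ Ss.Tfam β k := by
  obtain ⟨E, hE, hord, rfl⟩ := hG
  refine ⟨fun i => E i ∩ G', fun i => Ss.hered β hβ (E i) (hE i) _ Finset.inter_subset_left,
    fun i j hij x hxi y hyj => hord i j hij x (Finset.mem_inter.mp hxi).1 y
      (Finset.mem_inter.mp hyj).1, ?_⟩
  ext y
  simp only [Finset.mem_biUnion, Finset.mem_univ, true_and, Finset.mem_inter]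
  constructor
  · intro hy
    obtain ⟨i, _, hyi⟩ := Finset.mem_biUnion.mp (h hy)
    exact ⟨i, hyi, hy⟩
  · rintro ⟨i, _, hy⟩; exact hy

/-- "no infinite set has all its initial segments in the family" -/
def FinProp (α : Ordinal) : Prop :=
  ∀ A : Set ℕ, (∀ N, seg A N ∈ Ss.S α) → A.Finite

lemma finProp_Tfam {β : Ordinal} (hβ : β < omega1) (hfin : Ss.FinProp β) :
    ∀ k : ℕ, ∀ A : Set ℕ, (∀ N, seg A N ∈ Ss.Tfam β k) → A.Finite := by
  intro k
  induction k with
  | zero =>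
    intro A hA
    have : A = ∅ := by
      ext x
      simp only [Set.mem_empty_iff_false, iff_false]
      intro hx
      obtain ⟨E, _, _, hG⟩ := hA x
      have : x ∈ seg A x := mem_seg.mpr ⟨hx, le_refl _⟩
      rw [hG] at this
      obtain ⟨i, _, _⟩ := Finset.mem_biUnion.mp this
      exact i.elim0
    rw [this]; exact Set.finite_empty
  | succ k IHk =>
    intro A hA
    by_contra hfin'
    rw [← Set.not_infinite, not_not] at hfin'
    -- choose decompositions
    choose E hE hord hunion using hA
    -- the first block is an initial segment of A
    have hinit : ∀ N, ∀ x ∈ E N 0, ∀ y ∈ A, y ≤ x → y ∈ E N 0 := by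
      intro N x hx y hyA hyx
      have hxN : x ≤ N := by
        have : x ∈ seg A N := by rw [hunion N]; exact Finset.mem_biUnion.mpr ⟨0, Finset.mem_univ _, hx⟩
        exact (mem_seg.mp this).2
      have hy : y ∈ seg A N := mem_seg.mpr ⟨hyA, le_trans hyx hxN⟩
      rw [hunion N] at hy
      obtain ⟨j, _, hyj⟩ := Finset.mem_biUnion.mp hy
      by_cases hj : j = 0
      · subst hj; exact hyj
      · have h0j : (0 : Fin (k+1)) < j := Fin.pos_of_ne_zero hj
        have := hord N 0 j h0j x hx y hyj
        omega
    by_cases hbd : ∃ c, ∀ N, ∀ x ∈ E N 0, x ≤ c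
    · -- bounded first blocks: pigeonhole
      obtain ⟨c, hc⟩ := hbd
      have hsub : ∀ N, E N 0 ∈ (seg A c).powerset := by
        intro N
        rw [Finset.mem_powerset]
        intro x hx
        have : x ∈ seg A N := by rw [hunion N]; exact Finset.mem_biUnion.mpr ⟨0, Finset.mem_univ _, hx⟩
        exact mem_seg.mpr ⟨(mem_seg.mp this).1, hc N x hx⟩
      let g : ℕ → ((seg A c).powerset : Finset (Finset ℕ)) := fun N => ⟨E N 0, hsub N⟩
      obtain ⟨E₀, hE₀⟩ := Finite.exists_infinite_fiber g
      rw [Set.infinite_coe_iff] at hE₀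
      set A' : Set ℕ := {x ∈ A | x ∉ (E₀ : Finset ℕ)} with hA'
      have hA'seg : ∀ M, seg A' M ∈ Ss.Tfam β k := by
        intro M
        obtain ⟨N, hN𝒩, hMN⟩ := hE₀.exists_gt M
        have hgN : E N 0 = (E₀ : Finset ℕ) := by
          have : g N = E₀ := hN𝒩
          rw [← this]
        have step : seg A N \ (E₀ : Finset ℕ) ∈ Ss.Tfam β k := by
          refine ⟨fun i => E N i.succ, fun i => hE N i.succ, fun i j hij => hord N i.succ j.succ
            (by simpa using hij), ?_⟩
          ext x
          simp only [Finset.mem_sdiff, Finset.mem_biUnion, Finset.mem_univ, true_and]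
          constructor
          · rintro ⟨hx, hxE₀⟩
            rw [hunion N] at hx
            obtain ⟨j, _, hxj⟩ := Finset.mem_biUnion.mp hx
            by_cases hj : j = 0
            · subst hj; rw [hgN] at hxj; exact absurd hxj hxE₀
            · obtain ⟨j', rfl⟩ : ∃ j' : Fin k, j = j'.succ := ⟨j.pred hj, by simp⟩
              exact ⟨j', hxj⟩
          · rintro ⟨i, hxi⟩
            have hx : x ∈ seg A N := by
              rw [hunion N]; exact Finset.mem_biUnion.mpr ⟨i.succ, Finset.mem_univ _, hxi⟩
            refine ⟨hx, fun hxE₀ => ?_⟩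
            rw [← hgN] at hxE₀
            have := hord N 0 i.succ (Fin.succ_pos i) x hxE₀ x hxi
            omega
        refine Ss.Tfam_hered hβ step ?_
        intro x hx
        rw [mem_seg] at hx
        obtain ⟨⟨hxA, hxE₀⟩, hxM⟩ := hx
        exact Finset.mem_sdiff.mpr ⟨mem_seg.mpr ⟨hxA, by omega⟩, hxE₀⟩
      have hA'fin : A'.Finite := IHk A' hA'seg
      have : A.Finite := by
        have : A ⊆ A' ∪ ↑(E₀ : Finset ℕ) := by
          intro x hx
          by_cases h : x ∈ (E₀ : Finset ℕ)
          · exact Or.inr h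
          · exact Or.inl ⟨hx, h⟩
        exact Set.Finite.subset (hA'fin.union (Set.Finite.subset (E₀ : Finset ℕ).finite_toSet
          (le_refl _))) this
      exact hfin' this
    · -- unbounded first blocks: all segments are in S β
      push_neg at hbd
      have hall : ∀ M, seg A M ∈ Ss.S β := by
        intro M
        obtain ⟨N, x, hx, hMx⟩ := hbd M
        have hsub : seg A M ⊆ E N 0 := by
          intro y hy
          rw [mem_seg] at hy
          exact hinit N x hx y hy.1 (by omega)
        exact Ss.hered β hβ (E N 0) (hE N 0) _ hsub
      exact hfin' (hfin A hall)

lemma finProp : ∀ α < omega1, Ss.FinProp α := by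
  intro α
  induction α using Ordinal.induction with
  | _ α IH =>
    intro hα A hA
    rcases Ordinal.zero_or_succ_or_isSuccLimit α with h0 | ⟨a, rfl⟩ | hl
    · subst h0
      apply Set.Subsingleton.finite
      intro x hx y hy
      by_contra hxy
      have hmem : x ∈ seg A (max x y) := mem_seg.mpr ⟨hx, le_max_left _ _⟩
      have hmem' : y ∈ seg A (max x y) := mem_seg.mpr ⟨hy, le_max_right _ _⟩
      have := hA (max x y)
      rw [Ss.S_zero] at this
      have h2 : 1 < (seg A (max x y)).card := Finset.one_lt_card.mpr ⟨x, hmem, y, hmem', hxy⟩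
      have h1 : (seg A (max x y)).card ≤ 1 := this.1
      omega
    · rw [← Ordinal.add_one_eq_succ] at *
      have ha : a < omega1 := succ_lt_omega1 hα
      by_contra hfin'
      rw [← Set.not_infinite, not_not] at hfin'
      obtain ⟨a₀, ha₀⟩ := hfin'.nonempty
      classical
      have hex : ∃ z, z ∈ A := ⟨a₀, ha₀⟩
      set z := Nat.find hex with hz
      have hzA : z ∈ A := Nat.find_spec hex
      have hzmin : ∀ y ∈ A, z ≤ y := fun y hy => Nat.find_min' hex hy
      have hTseg : ∀ N, seg A N ∈ Ss.Tfam a z := by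
        intro N
        by_cases hNz : z ≤ N
        · have := hA N
          rw [Ss.S_succ a ha] at this
          obtain ⟨k, E, hE, hord, hmin, hG⟩ := this
          have hkz : k ≤ z := hmin z (mem_seg.mpr ⟨hzA, hNz⟩)
          refine ⟨fun i => if h : i.val < k then E ⟨i.val, h⟩ else ∅, ?_, ?_, ?_⟩
          · intro i
            by_cases h : i.val < k
            · simp only [dif_pos h]; exact hE _
            · simp only [dif_neg h]; exact Ss.empty_mem a ha
          · intro i j hij x hxi y hyj
            by_cases hi : i.val < k
            · by_cases hj : j.val < k
              · simp only [dif_pos hi] at hxi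
                simp only [dif_pos hj] at hyj
                exact hord ⟨i.val, hi⟩ ⟨j.val, hj⟩ (by simpa using hij) x hxi y hyj
              · simp only [dif_neg hj, Finset.notMem_empty] at hyj
            · simp only [dif_neg hi, Finset.notMem_empty] at hxi
          · rw [hG]
            ext x
            simp only [Finset.mem_biUnion, Finset.mem_univ, true_and]
            constructor
            · rintro ⟨i, hxi⟩
              refine ⟨⟨i.val, by omega⟩, ?_⟩
              simp only [dif_pos i.isLt]
              exact hxi
            · rintro ⟨i, hxi⟩
              by_cases h : i.val < k
              · simp only [dif_pos h] at hxi
                exact ⟨⟨i.val, h⟩, hxi⟩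
              · simp only [dif_neg h, Finset.notMem_empty] at hxi
        · have : seg A N = ∅ := by
            ext x
            simp only [Finset.notMem_empty, iff_false]
            intro hx
            rw [mem_seg] at hx
            have := hzmin x hx.1
            omega
          rw [this]
          refine ⟨fun _ => ∅, fun _ => Ss.empty_mem a ha, ?_, by ext x; simp⟩
          intro i j _ x hx
          simp at hx
      exact (Set.not_infinite.mpr (Ss.finProp_Tfam ha (IH a (by
        rw [Ordinal.add_one_eq_succ]; exact Order.lt_succ a) ha) z A hTseg)) hfin'
    · by_contra hfin'
      rw [← Set.not_infinite, not_not] at hfin'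
      obtain ⟨a₀, ha₀⟩ := hfin'.nonempty
      classical
      have hex : ∃ z, z ∈ A := ⟨a₀, ha₀⟩
      set z := Nat.find hex with hz
      have hzA : z ∈ A := Nat.find_spec hex
      have hzmin : ∀ y ∈ A, z ≤ y := fun y hy => Nat.find_min' hex hy
      have hz1 : 1 ≤ z := by
        have hseg : seg A z ∈ Ss.S α := hA z
        exact Ss.pos_mem α hα _ hseg z (mem_seg.mpr ⟨hzA, le_refl _⟩)
      -- for each N, get witness p < z
      have hwit : ∀ N : ℕ, ∃ p : Fin z, seg A (N + z) ∈ Ss.S (Ss.approx α p.val) := by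
        intro N
        have := hA (N + z)
        rw [Ss.S_limit α hα hl] at this
        obtain ⟨p, hp, hpmin⟩ := this
        have hpz : p < z := by
          have := hpmin z (mem_seg.mpr ⟨hzA, by omega⟩)
          omega
        exact ⟨⟨p, hpz⟩, hp⟩
      choose g hg using hwit
      obtain ⟨p₀, hp₀⟩ := Finite.exists_infinite_fiber g
      rw [Set.infinite_coe_iff] at hp₀
      have happ : Ss.approx α p₀.val < α := Ss.approx_lt α hα hl p₀.val
      have happω : Ss.approx α p₀.val < omega1 := lt_trans happ hα
      have hall : ∀ M, seg A M ∈ Ss.S (Ss.approx α p₀.val) := by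
        intro M
        obtain ⟨N, hN, hMN⟩ := hp₀.exists_gt M
        have hgN : g N = p₀ := hN
        have : seg A (N + z) ∈ Ss.S (Ss.approx α p₀.val) := by rw [← hgN]; exact hg N
        exact Ss.hered _ happω _ this _ (seg_mono (by omega))
      exact (Set.not_infinite.mpr (IH _ happ happω A hall)) hfin'

lemma isClosed_chf_image {α : Ordinal} (hα : α < omega1) :
    IsClosed (chf '' Ss.S α) := by
  rw [← closure_subset_iff_isClosed]
  intro f hf
  set A : Set ℕ := {i | f i = true} with hA
  have hseg : ∀ N, seg A N ∈ Ss.S α := by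
    intro N
    set V : Set (ℕ → Bool) := ⋂ i ∈ Finset.range (N + 1), {g : ℕ → Bool | g i = f i} with hV
    have hVopen : IsOpen V := by
      apply isOpen_biInter_finset
      intro i _
      have : {g : ℕ → Bool | g i = f i} = (fun g : ℕ → Bool => g i) ⁻¹' {f i} := rfl
      rw [this]
      exact (continuous_apply i).isOpen_preimage _ (isOpen_discrete _)
    have hfV : f ∈ V := by simp [hV]
    obtain ⟨g, hgV, hgK⟩ := mem_closure_iff.mp hf V hVopen hfV
    obtain ⟨F, hF, rfl⟩ := hgK
    refine Ss.hered α hα F hF _ ?_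
    intro x hx
    rw [mem_seg] at hx
    have hcoord : chf F x = f x := by
      have := Set.mem_iInter₂.mp hgV x (Finset.mem_range.mpr (by omega))
      exact this
    have : chf F x = true := by rw [hcoord]; exact hx.1
    simpa [chf] using this
  have hAfin : A.Finite := Ss.finProp α hα A hseg
  obtain ⟨M, hM⟩ := hAfin.bddAbove
  refine ⟨seg A M, hseg M, ?_⟩
  funext i
  by_cases h : f i = true
  · have : i ∈ seg A M := mem_seg.mpr ⟨h, hM h⟩
    simp [chf, this, h]
  · have h' : f i = false := by cases hfi : f i; rfl; exact absurd hfi h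
    have : i ∉ seg A M := by
      intro hmem
      exact h (mem_seg.mp hmem).1
    simp [chf, this, h']

end SchreierSeq


/-- the embedding `g ↦ {n} ∪ (g + N)` on characteristic functions -/
def fmap (n N : ℕ) : (ℕ → Bool) → (ℕ → Bool) :=
  fun g j => if j = n then true else if j < N then false else g (j - N)

lemma fmap_continuous (n N : ℕ) : Continuous (fmap n N) := by
  refine continuous_pi fun j => ?_
  by_cases h1 : j = n
  · simp only [fmap, h1, if_pos rfl]; exact continuous_const
  · by_cases h2 : j < N
    · simp only [fmap, if_neg h1, if_pos h2]; exact continuous_const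
    · simp only [fmap, if_neg h1, if_neg h2]; exact continuous_apply _

lemma fmap_injective {n N : ℕ} (hn : n < N) : Function.Injective (fmap n N) := by
  intro g1 g2 h
  funext i
  have := congrFun h (i + N)
  simp only [fmap, if_neg (by omega : ¬ i + N = n), if_neg (by omega : ¬ i + N < N),
    Nat.add_sub_cancel] at this
  exact this

lemma chf_fmap {n N : ℕ} (hn : n < N) (F : Finset ℕ) (hpos : ∀ x ∈ F, 1 ≤ x) :
    fmap n N (chf F) = chf (insert n (F.image (· + N))) := by
  funext j
  by_cases h1 : j = n
  · subst h1
    simp [fmap, chf]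
  · by_cases h2 : j < N
    · have hnot : j ∉ insert n (F.image (· + N)) := by
        intro hmem
        rcases Finset.mem_insert.mp hmem with rfl | himg
        · exact h1 rfl
        · obtain ⟨z, hz, hzj⟩ := Finset.mem_image.mp himg
          have := hpos z hz
          omega
      simp [fmap, chf, h1, h2, hnot]
    · have hiff : (j - N ∈ F) ↔ (j ∈ insert n (F.image (· + N))) := by
        constructor
        · intro h
          exact Finset.mem_insert.mpr (Or.inr (Finset.mem_image.mpr ⟨j - N, h, by omega⟩))
        · intro h
          rcases Finset.mem_insert.mp h with rfl | himg
          · omega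
          · obtain ⟨z, hz, hzj⟩ := Finset.mem_image.mp himg
            have hz1 : z = j - N := by omega
            rwa [← hz1]
      simp only [fmap, if_neg h1, if_neg h2, chf]
      exact decide_eq_decide.mpr hiff

/-- Lemma (rk).  For `1 ≤ α < ω₁`, the Cantor–Bendixson rank of the
singleton `{n}` in the compact space `S_α ⊆ {0,1}^ℕ` is strictly increasing in `n`:
if `m < n` and `β_m, β_n` are the (largest) ordinals with
`{m} ∈ S_α^{(β_m)} \ S_α^{(β_m+1)}` and `{n} ∈ S_α^{(β_n)} \ S_α^{(β_n+1)}`, then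
`β_m < β_n`. -/
theorem schreier_singleton_rank_strictMono
    (Ss : SchreierSeq) (α : Ordinal) (hα1 : 1 ≤ α) (hα2 : α < omega1)
    (m n : ℕ) (hm : 1 ≤ m) (hmn : m < n) (βm βn : Ordinal)
    (hβm1 : chf {m} ∈ cbIter (chf '' Ss.S α) βm)
    (hβm2 : chf {m} ∉ cbIter (chf '' Ss.S α) (βm + 1))
    (hβn1 : chf {n} ∈ cbIter (chf '' Ss.S α) βn)
    (hβn2 : chf {n} ∉ cbIter (chf '' Ss.S α) (βn + 1)) :
    βm < βn := by
  by_contra hcon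
  push_neg at hcon
  -- hcon : βn ≤ βm
  set K : Set (ℕ → Bool) := chf '' Ss.S α with hK
  have hKc : IsClosed K := Ss.isClosed_chf_image hα2
  -- localize at a clopen neighbourhood of chf {m}
  set U : Set (ℕ → Bool) :=
    {g | g m = true} ∩ ⋂ i ∈ Finset.range m, {g : ℕ → Bool | g i = false} with hU
  have hUopen : IsOpen U := by
    refine IsOpen.inter ?_ (isOpen_biInter_finset fun i _ => ?_)
    · show IsOpen ((fun g : ℕ → Bool => g m) ⁻¹' {true})
      exact (continuous_apply m).isOpen_preimage _ (isOpen_discrete _)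
    · show IsOpen ((fun g : ℕ → Bool => g i) ⁻¹' {false})
      exact (continuous_apply i).isOpen_preimage _ (isOpen_discrete _)
  have hmU : chf {m} ∈ U := by
    constructor
    · simp [chf]
    · refine Set.mem_iInter₂.mpr fun i hi => ?_
      rw [Finset.mem_range] at hi
      simp only [Set.mem_setOf_eq, chf]
      simp only [Finset.mem_singleton]
      exact decide_eq_false (by omega)
  have h1 : chf {m} ∈ cbIter (K ∩ U) βm := cbIter_inter_open hUopen βm ⟨hβm1, hmU⟩
  -- the embeddings
  have himg : ∀ N : ℕ, n < N → fmap n N '' (K ∩ U) ⊆ K := by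
    rintro N hnN _ ⟨g, ⟨⟨F, hF, rfl⟩, hgU⟩, rfl⟩
    have hmF : m ∈ F := by
      have := hgU.1
      simp only [Set.mem_setOf_eq, chf, decide_eq_true_eq] at this
      exact this
    have hFmin : ∀ x ∈ F, m ≤ x := by
      intro x hx
      by_contra hxm
      have := Set.mem_iInter₂.mp hgU.2 x (Finset.mem_range.mpr (by omega))
      simp only [Set.mem_setOf_eq, chf] at this
      rw [decide_eq_false_iff_not] at this
      exact this hx
    have hFpos : ∀ x ∈ F, 1 ≤ x := Ss.pos_mem α hα2 F hF
    have hKS : insert n (F.image (· + N)) ∈ Ss.S α :=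
      Ss.key_lemma α hα1 hα2 m n N hm hmn (by omega) F hF hmF hFmin
    exact ⟨insert n (F.image (· + N)), hKS, (chf_fmap hnN F hFpos).symm⟩
  -- the approximating points
  have hy : ∀ t : ℕ, chf (insert n (Finset.image (· + (n + 1 + t)) {m})) ∈ cbIter K βn := by
    intro t
    have hnN : n < n + 1 + t := by omega
    have step1 : fmap n (n + 1 + t) (chf {m}) ∈ cbIter (fmap n (n + 1 + t) '' (K ∩ U)) βm :=
      image_cbIter_subset (fmap_continuous n _) (fmap_injective hnN) (K ∩ U) βm
        ⟨chf {m}, h1, rfl⟩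
    have step2 : fmap n (n + 1 + t) (chf {m}) ∈ cbIter K βm :=
      cbIter_mono (himg _ hnN) βm step1
    have step3 : fmap n (n + 1 + t) (chf {m}) ∈ cbIter K βn :=
      cbIter_antitone hKc hcon step2
    rwa [chf_fmap hnN {m} (by intro x hx; simp only [Finset.mem_singleton] at hx; omega)]
      at step3
  -- they are distinct from chf {n} and converge to it
  have hy_ne : ∀ t : ℕ, chf (insert n (Finset.image (· + (n + 1 + t)) {m})) ≠ chf {n} := by
    intro t h
    have := congrFun h (m + (n + 1 + t))
    simp only [chf] at this
    rw [decide_eq_decide] at this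
    have h2 : m + (n + 1 + t) = n := by
      rw [Finset.mem_singleton] at this
      exact this.mp (Finset.mem_insert.mpr (Or.inr
        (Finset.mem_image.mpr ⟨m, Finset.mem_singleton_self m, rfl⟩)))
    omega
  have htend : Filter.Tendsto (fun t => chf (insert n (Finset.image (· + (n + 1 + t)) {m})))
      Filter.atTop (nhds (chf {n})) := by
    rw [tendsto_pi_nhds]
    intro j
    apply tendsto_atTop_of_eventually_const (i₀ := j)
    intro t ht
    simp only [chf]
    refine decide_eq_decide.mpr ?_
    constructor
    · intro hmem
      rcases Finset.mem_insert.mp hmem with rfl | himg2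
      · exact Finset.mem_singleton_self _
      · obtain ⟨z, hz, hzj⟩ := Finset.mem_image.mp himg2
        rw [Finset.mem_singleton] at hz
        omega
    · intro hmem
      rw [Finset.mem_singleton] at hmem
      subst hmem
      exact Finset.mem_insert_self _ _
  have hclo : chf {n} ∈ closure (cbIter K βn \ {chf {n}}) :=
    mem_closure_of_tendsto htend (Filter.Eventually.of_forall fun t => ⟨hy t, hy_ne t⟩)
  have hfin : chf {n} ∈ cbIter K (βn + 1) := by
    rw [cbIter_succ]
    exact mem_derivSet.mpr hclo
  exact hβn2 hfin

end
end

section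
/- Let (S_α)_{α<ω₁} be a transfinite Schreier sequence, and let α < ω₁ be a successor ordinal, α = β + 1. If G ∈ S_α^MAX, then G = G_1 ∪ ⋯ ∪ G_m where G_1 < G_2 < ⋯ < G_m, each G_i ∈ S_β^MAX, and m = min G_1. -/
open Filter Topology NormedSpace

noncomputable section

/-!
If a piece `Gᵢ` of a decomposition of `G ∈ S_{β+1}` were not maximal in `S_β`, it could absorb
the least element of the next nonempty piece, which then becomes non-maximal in turn; in the end
the last piece absorbs a new element `z > max G`, contradicting the maximality of `G`. That a
non-maximal member of `S_β` absorbs any larger integer is proved by induction on `β`, by the same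
cascade at successor steps. With fewer than `min G` pieces, `{z}` could be appended as a new one.
-/

open Finset

/-- Empty pieces are allowed, so `n` only bounds the number of nonempty pieces. -/
inductive IsSuccessiveUnion (𝓕 : Set (Finset ℕ)) : ℕ → Finset ℕ → Prop
  | empty : IsSuccessiveUnion 𝓕 0 ∅
  | cons {n : ℕ} {A U : Finset ℕ} :
      A ∈ 𝓕 → OrdSets A U → IsSuccessiveUnion 𝓕 n U → IsSuccessiveUnion 𝓕 (n + 1) (A ∪ U)

def IsExtendableAbove (𝓕 : Set (Finset ℕ)) : Prop :=
  ∀ ⦃E H : Finset ℕ⦄, H ∈ 𝓕 → E ⊂ H → ∀ ⦃z : ℕ⦄, 0 < z → (∀ x ∈ E, x < z) → insert z E ∈ 𝓕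

namespace IsSuccessiveUnion

variable {𝓕 : Set (Finset ℕ)} {n : ℕ} {U : Finset ℕ}

theorem iff_exists_fin :
    IsSuccessiveUnion 𝓕 n U ↔ ∃ E : Fin n → Finset ℕ, (∀ i, E i ∈ 𝓕) ∧
      (∀ i j : Fin n, i < j → OrdSets (E i) (E j)) ∧ U = univ.biUnion E := by
  constructor
  · intro h
    induction h with
    | empty => exact ⟨Fin.elim0, fun i => i.elim0, fun i => i.elim0, by simp⟩
    | @cons n A U hA hAU _ ih =>
      obtain ⟨E, hE, hord, rfl⟩ := ih
      refine ⟨Fin.cons A E, Fin.cases hA hE, ?_, ?_⟩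
      · intro i j hij
        cases i using Fin.cases with
        | zero =>
          cases j using Fin.cases with
          | zero => exact absurd hij (lt_irrefl 0)
          | succ j => exact fun x hx y hy => hAU x hx y (mem_biUnion.2 ⟨j, mem_univ j, hy⟩)
        | succ i =>
          cases j using Fin.cases with
          | zero => exact absurd hij (Fin.succ_pos i).not_gt
          | succ j => exact hord i j (Fin.succ_lt_succ_iff.1 hij)
      · ext x
        simp [Fin.exists_fin_succ]
  · rintro ⟨E, hE, hord, rfl⟩
    induction n with
    | zero => simpa using empty
    | succ n ih =>
      have hsplit : univ.biUnion E = E 0 ∪ univ.biUnion fun i : Fin n => E i.succ := by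
        ext x
        simp [Fin.exists_fin_succ]
      rw [hsplit]
      refine cons (hE 0) ?_
        (ih _ (fun i => hE _) fun i j hij => hord _ _ (Fin.succ_lt_succ_iff.2 hij))
      intro x hx y hy
      obtain ⟨j, -, hy⟩ := mem_biUnion.1 hy
      exact hord 0 j.succ (Fin.succ_pos j) x hx y hy

theorem zero_notMem (h : IsSuccessiveUnion 𝓕 n U) (h𝓕 : ∀ A ∈ 𝓕, 0 ∉ A) : 0 ∉ U := by
  induction h with
  | empty => simp
  | cons hA _ _ ih => simpa [not_or] using ⟨h𝓕 _ hA, ih⟩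

theorem of_subset (h𝓕 : IsLowerSet 𝓕) (h : IsSuccessiveUnion 𝓕 n U) {E : Finset ℕ}
    (hE : E ⊆ U) : IsSuccessiveUnion 𝓕 n E := by
  induction h generalizing E with
  | empty => simpa [subset_empty.1 hE] using empty
  | @cons n A U hA hAU _ ih =>
    have hsplit : E = E ∩ A ∪ E ∩ U := by rw [← inter_union_distrib_left, inter_eq_left.2 hE]
    rw [hsplit]
    exact cons (h𝓕 inter_subset_right hA)
      (fun x hx y hy => hAU x (mem_inter.1 hx).2 y (mem_inter.1 hy).2) (ih inter_subset_right)

theorem snoc (h : IsSuccessiveUnion 𝓕 n U) {A : Finset ℕ} (hA : A ∈ 𝓕)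
    (hUA : OrdSets U A) : IsSuccessiveUnion 𝓕 (n + 1) (U ∪ A) := by
  induction h with
  | empty => simpa using cons hA (fun _ _ _ hy => absurd hy (notMem_empty _)) empty
  | @cons n B U hB hBU _ ih =>
    rw [union_assoc]
    refine cons hB ?_ (ih fun x hx y hy => hUA x (mem_union_right _ hx) y hy)
    intro x hx y hy
    rcases mem_union.1 hy with hy | hy
    · exact hBU x hx y hy
    · exact hUA x (mem_union_left _ hx) y hy

variable (h𝓕 : IsLowerSet 𝓕) (hext : IsExtendableAbove 𝓕)
include h𝓕 hext

/-- The extension cascades to the right: the piece after `A` gives its least element to `A`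
and is then itself non-maximal. -/
theorem insert_union_of_ssubset {R : Finset ℕ} (hR : IsSuccessiveUnion 𝓕 n R) {A H : Finset ℕ} (hH : H ∈ 𝓕)
    (hAH : A ⊂ H) (hAR : OrdSets A R) (hR0 : 0 ∉ R) {z : ℕ} (hz : 0 < z)
    (hzAR : ∀ x ∈ A ∪ R, x < z) : IsSuccessiveUnion 𝓕 (n + 1) (insert z (A ∪ R)) := by
  induction hR generalizing A H with
  | empty =>
    simpa using cons (hext hH hAH hz fun x hx => hzAR x (by simpa using hx))
      (fun _ _ _ hy => absurd hy (notMem_empty _)) empty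
  | @cons n B R hB hBR hR ih =>
    rcases B.eq_empty_or_nonempty with rfl | hBne
    · have h := ih hH hAH (fun x hx y hy => hAR x hx y (by simpa using hy)) (by simpa using hR0)
        (fun x hx => hzAR x (by simpa using hx))
      simpa using cons (h𝓕 (empty_subset H) hH) (fun _ hx _ _ => absurd hx (notMem_empty _)) h
    set w := B.min' hBne
    have hwB : w ∈ B := B.min'_mem hBne
    have hAw : ∀ x ∈ A, x < w := fun x hx => hAR x hx w (mem_union_left _ hwB)
    have hwA : insert w A ∈ 𝓕 :=
      hext hH hAH (Nat.pos_of_ne_zero fun h => hR0 (h ▸ mem_union_left _ hwB)) hAw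
    have h := ih hB (erase_ssubset hwB)
      (fun x hx y hy => hBR x (mem_of_mem_erase hx) y hy) (fun h => hR0 (mem_union_right _ h))
      (fun x hx => hzAR x (by grind))
    have hwz : w < z := hzAR w (by simp [hwB])
    have hord : OrdSets (insert w A) (insert z (B.erase w ∪ R)) := by
      intro x hx y hy
      have hxw : x ≤ w := by grind
      rcases mem_insert.1 hy with rfl | hy
      · omega
      rcases mem_union.1 hy with hy | hy
      · exact lt_of_le_of_lt hxw (lt_of_le_of_ne (B.min'_le y (mem_of_mem_erase hy))
          (ne_of_mem_erase hy).symm)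
      · exact lt_of_le_of_lt hxw (hBR w hwB y hy)
    convert cons hwA hord h using 1
    ext x
    by_cases hx : x = w <;> simp [hx, hwB]

theorem insert_of_ssubset {H : Finset ℕ} (hH : IsSuccessiveUnion 𝓕 n H) (hH0 : 0 ∉ H) {E : Finset ℕ}
    (hEH : E ⊂ H) {z : ℕ} (hz : 0 < z) (hzE : ∀ x ∈ E, x < z) :
    IsSuccessiveUnion 𝓕 n (insert z E) := by
  induction hH generalizing E with
  | empty => exact absurd hEH (not_ssubset_empty E)
  | @cons n A U hA hAU hU ih =>
    have hEsplit : E = E ∩ A ∪ E ∩ U := by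
      rw [← inter_union_distrib_left, inter_eq_left.2 hEH.subset]
    have hEA : E ∩ A ∈ 𝓕 := h𝓕 inter_subset_right hA
    have hEAU : OrdSets (E ∩ A) U := fun x hx => hAU x (mem_inter.1 hx).2
    by_cases hUE : U ⊆ E
    · have hEA_ssubset : E ∩ A ⊂ A := by
        refine ssubset_of_subset_of_ne inter_subset_right fun h => hEH.ne ?_
        rw [hEsplit, h, inter_eq_right.2 hUE]
      have h := insert_union_of_ssubset h𝓕 hext hU hA hEA_ssubset hEAU
        (fun h => hH0 (mem_union_right _ h)) hz (by grind)
      rwa [← inter_eq_right.2 hUE, ← hEsplit] at h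
    · have h := ih (fun h => hH0 (mem_union_right _ h))
        (ssubset_of_subset_of_ne inter_subset_right fun h => hUE (h ▸ inter_subset_left))
        fun x hx => hzE x (mem_inter.1 hx).1
      have hord : OrdSets (E ∩ A) (insert z (E ∩ U)) := by
        intro x hx y hy
        rcases mem_insert.1 hy with rfl | hy
        · exact hzE x (mem_inter.1 hx).1
        · exact hEAU x hx y (mem_inter.1 hy).2
      convert cons hEA hord h using 1
      rw [union_insert, ← hEsplit]

theorem insert_of_not_famMax (hU : IsSuccessiveUnion 𝓕 n U)
    (hmax : ¬IsSuccessiveUnion (famMax 𝓕) n U) (hU0 : 0 ∉ U) {z : ℕ} (hz : 0 < z)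
    (hzU : ∀ x ∈ U, x < z) : IsSuccessiveUnion 𝓕 n (insert z U) := by
  induction hU with
  | empty => exact absurd empty hmax
  | @cons n A U hA hAU hU ih =>
    by_cases hAmax : A ∈ famMax 𝓕
    · have h := ih (fun h => hmax (cons hAmax hAU h)) (fun h => hU0 (mem_union_right _ h))
        fun x hx => hzU x (mem_union_right _ hx)
      have hord : OrdSets A (insert z U) := by
        intro x hx y hy
        rcases mem_insert.1 hy with rfl | hy
        · exact hzU x (mem_union_left _ hx)
        · exact hAU x hx y hy
      simpa [union_insert] using cons hA hord h
    · obtain ⟨H, hH, hAH, hne⟩ : ∃ H ∈ 𝓕, A ⊆ H ∧ A ≠ H := by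
        simpa [famMax, hA] using hAmax
      exact insert_union_of_ssubset h𝓕 hext hU hH (ssubset_of_subset_of_ne hAH hne) hAU
        (fun h => hU0 (mem_union_right _ h)) hz hzU

end IsSuccessiveUnion

theorem insert_notMem_of_mem_famMax {𝓕 : Set (Finset ℕ)} {G : Finset ℕ} (hG : G ∈ famMax 𝓕)
    {z : ℕ} (hz : z ∉ G) : insert z G ∉ 𝓕 :=
  fun h => hz (hG.2 _ h (subset_insert z G) ▸ mem_insert_self z G)

namespace SchreierSeq

variable (Ss : SchreierSeq) {β : Ordinal}

theorem mem_S_add_one_iff (hβ : β < omega1) {G : Finset ℕ} :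
    G ∈ Ss.S (β + 1) ↔ ∃ n, IsSuccessiveUnion (Ss.S β) n G ∧ ∀ x ∈ G, n ≤ x := by
  simp only [Ss.S_succ β hβ, Set.mem_ofPred_eq, IsSuccessiveUnion.iff_exists_fin]
  constructor
  · rintro ⟨n, E, hE, hord, hn, hG⟩
    exact ⟨n, ⟨E, hE, hord, hG⟩, hn⟩
  · rintro ⟨n, ⟨E, hE, hord, hG⟩, hn⟩
    exact ⟨n, E, hE, hord, hn, hG⟩

theorem mem_S_of_isSuccLimit {α : Ordinal} (hα : α < omega1) (hlim : Order.IsSuccLimit α)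
    {F : Finset ℕ} (n : ℕ) (hF : F ∈ Ss.S (Ss.approx α n)) (hn : ∀ x ∈ F, n + 1 ≤ x) :
    F ∈ Ss.S α := by
  rw [Ss.S_limit α hα hlim]
  exact ⟨n, hF, hn⟩

theorem singleton_mem_S (hβ : β < omega1) {k : ℕ} (hk : 0 < k) : {k} ∈ Ss.S β := by
  induction β using Ordinal.limitRecOn with
  | zero => simpa [Ss.S_zero, Nat.one_le_iff_ne_zero] using hk.ne
  | add_one γ ih =>
    have hγ : γ < omega1 := (lt_add_one _).trans hβ
    rw [Ss.mem_S_add_one_iff hγ]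
    have h := IsSuccessiveUnion.cons (ih hγ) (by simp [OrdSets]) IsSuccessiveUnion.empty
    exact ⟨1, by simpa using h, fun x hx => mem_singleton.1 hx ▸ hk⟩
  | limit α hlim ih =>
    have hlt := Ss.approx_lt α hβ hlim 0
    exact Ss.mem_S_of_isSuccLimit hβ hlim 0 (ih _ hlt (hlt.trans hβ))
      fun x hx => mem_singleton.1 hx ▸ hk

theorem zero_notMem_S (hβ : β < omega1) {F : Finset ℕ} (hF : F ∈ Ss.S β) : 0 ∉ F := by
  induction β using Ordinal.limitRecOn generalizing F with
  | zero =>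
    rw [Ss.S_zero] at hF
    exact fun h => absurd (hF.2 0 h) (by norm_num)
  | add_one γ ih =>
    have hγ : γ < omega1 := (lt_add_one _).trans hβ
    obtain ⟨n, hF, -⟩ := (Ss.mem_S_add_one_iff hγ).1 hF
    exact hF.zero_notMem fun A hA => ih hγ hA
  | limit α hlim ih =>
    rw [Ss.S_limit α hβ hlim] at hF
    obtain ⟨n, -, hn⟩ := hF
    exact fun h => absurd (hn 0 h) (by omega)

theorem isLowerSet_S (hβ : β < omega1) : IsLowerSet (Ss.S β) := by
  induction β using Ordinal.limitRecOn with
  | zero =>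
    rw [Ss.S_zero]
    exact fun F E hEF hF => ⟨(card_le_card hEF).trans hF.1, fun i hi => hF.2 i (hEF hi)⟩
  | add_one γ ih =>
    have hγ : γ < omega1 := (lt_add_one _).trans hβ
    intro F E hEF hF
    obtain ⟨n, hF, hn⟩ := (Ss.mem_S_add_one_iff hγ).1 hF
    exact (Ss.mem_S_add_one_iff hγ).2 ⟨n, hF.of_subset (ih hγ) hEF, fun x hx => hn x (hEF hx)⟩
  | limit α hlim ih =>
    intro F E hEF hF
    rw [Ss.S_limit α hβ hlim] at hF
    obtain ⟨n, hF, hn⟩ := hF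
    have hlt := Ss.approx_lt α hβ hlim n
    exact Ss.mem_S_of_isSuccLimit hβ hlim n (ih _ hlt (hlt.trans hβ) hEF hF)
      fun x hx => hn x (hEF hx)

theorem isExtendableAbove_S (hβ : β < omega1) : IsExtendableAbove (Ss.S β) := by
  induction β using Ordinal.limitRecOn with
  | zero =>
    intro E H hH hEH z hz _
    rw [Ss.S_zero] at hH
    have hE : E = ∅ := card_eq_zero.1 (by have := card_lt_card hEH; have := hH.1; omega)
    simpa [hE] using Ss.singleton_mem_S hβ hz
  | add_one γ ih =>
    have hγ : γ < omega1 := (lt_add_one _).trans hβ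
    intro E H hH hEH z hz hzE
    rcases E.eq_empty_or_nonempty with rfl | ⟨e, he⟩
    · simpa using Ss.singleton_mem_S hβ hz
    obtain ⟨n, hH, hn⟩ := (Ss.mem_S_add_one_iff hγ).1 hH
    refine (Ss.mem_S_add_one_iff hγ).2 ⟨n, ?_, ?_⟩
    · exact hH.insert_of_ssubset (Ss.isLowerSet_S hγ) (ih hγ)
        (hH.zero_notMem fun A hA => Ss.zero_notMem_S hγ hA) hEH hz hzE
    · have := hn e (hEH.subset he)
      have := hzE e he
      grind
  | limit α hlim ih =>
    intro E H hH hEH z hz hzE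
    rcases E.eq_empty_or_nonempty with rfl | ⟨e, he⟩
    · simpa using Ss.singleton_mem_S hβ hz
    rw [Ss.S_limit α hβ hlim] at hH
    obtain ⟨n, hH, hn⟩ := hH
    have hlt := Ss.approx_lt α hβ hlim n
    refine Ss.mem_S_of_isSuccLimit hβ hlim n (ih _ hlt (hlt.trans hβ) hH hEH hz hzE) ?_
    have := hn e (hEH.subset he)
    have := hzE e he
    grind

theorem nonempty_of_mem_famMax (hβ : β < omega1) {G : Finset ℕ} (hG : G ∈ famMax (Ss.S β)) :
    G.Nonempty := by
  rw [nonempty_iff_ne_empty]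
  rintro rfl
  exact insert_notMem_of_mem_famMax hG (notMem_empty 1)
    (by simpa using Ss.singleton_mem_S hβ one_pos)

variable {G : Finset ℕ} {n : ℕ}

theorem isSuccessiveUnion_famMax_of_mem_famMax (hβ : β < omega1)
    (hG : G ∈ famMax (Ss.S (β + 1))) (hne : G.Nonempty) (hU : IsSuccessiveUnion (Ss.S β) n G)
    (hn : ∀ x ∈ G, n ≤ x) : IsSuccessiveUnion (famMax (Ss.S β)) n G := by
  by_contra hmax
  set z := G.max' hne + 1
  have hzG : ∀ x ∈ G, x < z := fun x hx => Nat.lt_succ_of_le (G.le_max' x hx)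
  refine insert_notMem_of_mem_famMax hG (fun h => lt_irrefl z (hzG z h)) ?_
  refine (Ss.mem_S_add_one_iff hβ).2 ⟨n, ?_, ?_⟩
  · exact hU.insert_of_not_famMax (Ss.isLowerSet_S hβ) (Ss.isExtendableAbove_S hβ) hmax
      (hU.zero_notMem fun A hA => Ss.zero_notMem_S hβ hA) (Nat.succ_pos _) hzG
  · intro x hx
    rcases mem_insert.1 hx with rfl | hx
    · exact (hn _ (G.max'_mem hne)).trans (Nat.le_succ _)
    · exact hn x hx

theorem min'_le_of_mem_famMax (hβ : β < omega1) (hG : G ∈ famMax (Ss.S (β + 1)))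
    (hne : G.Nonempty) (hU : IsSuccessiveUnion (Ss.S β) n G) : G.min' hne ≤ n := by
  by_contra! hlt
  set z := G.max' hne + 1
  have hzG : ∀ x ∈ G, x < z := fun x hx => Nat.lt_succ_of_le (G.le_max' x hx)
  refine insert_notMem_of_mem_famMax hG (fun h => lt_irrefl z (hzG z h)) ?_
  have h := hU.snoc (Ss.singleton_mem_S hβ (Nat.succ_pos _))
    fun x hx y hy => mem_singleton.1 hy ▸ hzG x hx
  refine (Ss.mem_S_add_one_iff hβ).2 ⟨n + 1, by simpa [union_comm] using h, ?_⟩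
  intro x hx
  rcases mem_insert.1 hx with rfl | hx
  · exact hlt.trans (hzG _ (G.min'_mem hne))
  · exact hlt.trans_le (G.min'_le x hx)

end SchreierSeq

/-- Lemma (maxsucc).  If `α = β + 1 < ω₁` and `G ∈ S_α^MAX`, then
`G = G_1 ∪ ⋯ ∪ G_m` with `G_1 < ⋯ < G_m`, each `G_i ∈ S_β^MAX`, and `m = min G_1`
(equivalently, `m = min G`). -/
theorem maximal_schreier_set_decomposition
    (Ss : SchreierSeq) (β : Ordinal) (hβ : β + 1 < omega1)
    (G : Finset ℕ) (hG : G ∈ famMax (Ss.S (β + 1))) :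
    ∃ (m : ℕ) (Gs : Fin m → Finset ℕ),
      (∀ i, Gs i ∈ famMax (Ss.S β)) ∧
      (∀ i j : Fin m, i < j → OrdSets (Gs i) (Gs j)) ∧
      G = Finset.univ.biUnion Gs ∧
      m ∈ G ∧ (∀ x ∈ G, m ≤ x) := by
  have hβ' : β < omega1 := (lt_add_one _).trans hβ
  obtain ⟨n, hU, hn⟩ := (Ss.mem_S_add_one_iff hβ').1 hG.1
  have hne := Ss.nonempty_of_mem_famMax hβ hG
  obtain ⟨Gs, hGs_max, hGs_ord, hG_eq⟩ := IsSuccessiveUnion.iff_exists_fin.1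
    (Ss.isSuccessiveUnion_famMax_of_mem_famMax hβ' hG hne hU hn)
  have hn_min : n = G.min' hne :=
    le_antisymm (hn _ (G.min'_mem hne)) (Ss.min'_le_of_mem_famMax hβ' hG hne hU)
  exact ⟨n, Gs, hGs_max, hGs_ord, hG_eq, hn_min ▸ G.min'_mem hne, hn⟩

end
end
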